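/- Let R be a complete discrete valuation domain with maximal ideal generated by π and field of fractions Q, let A be a finite-dimensional separable Q-algebra, let Λ be an R-order in A, and let k₀ ∈ ℕ be such that for every short exact sequence 0 → N' → X →^p L' → 0 of Λ-lattices there is a Λ-homomorphism h : L' → X with p∘h = π^{k₀}·id_{L'}. Fix an integer k > k₀ and an R-torsionfree Λ-module N, and write N_k = N/Nπ^k and Λ_k = Λ/π^kΛ. For a (1+l)×n matrix S with entries in Λ_k, choose a matrix S* over Λ lifting S entrywise, and set sol*_S(N) = {m ∈ N : there is y ∈ N^l such that every entry of the row vector (m,y)·S* lies in Nπ^k}; this set does not depend on the chosen lift S*. Then the assignment sol_S(N_k) ↦ sol*_S(N) is a well-defined inclusion-preserving bijection, with inclusion-preserving inverse, from the set of subgroups of N_k of the form sol_S(N_k) with S a matrix over Λ_k and sol_S(N_k) ⊇ π^{k−k₀}·N_k, onto the set of subgroups of N of the form sol_T(N) with T a matrix over Λ and sol_T(N) ⊇ π^{k−k₀}·N; that is, it is a lattice isomorphism between the intervals [π^{k−k₀}|x, x=x] of the lattices of pp-definable subgroups of N_k and of N. -/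

import Mathlib

open scoped TensorProduct

universe u v w

/-- A module `M` over `Λ` is pure injective (equivalently, algebraically compact) if every
system of linear equations with coefficients in `Λ` (almost all zero in each equation) and
parameters in `M`, each of whose finite subsystems has a solution in `M`, has a solution
in `M`. -/
def PureInjective (Λ : Type u) [Ring Λ] (M : Type v) [AddCommGroup M] [Module Λ M] : Prop :=
  ∀ (ι κ : Type w) (a : ι → κ →₀ Λ) (b : ι → M),
    (∀ s : Finset ι, ∃ x : κ → M, ∀ i ∈ s, ((a i).sum fun j c => c • x j) = b i) →
    ∃ x : κ → M, ∀ i, ((a i).sum fun j c => c • x j) = b i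

/-- A module is indecomposable if it is nonzero and is not the internal direct sum of two
nonzero submodules. -/
def IsIndecomposable (Λ : Type u) [Ring Λ] (M : Type v) [AddCommGroup M] [Module Λ M] : Prop :=
  (∃ m : M, m ≠ 0) ∧ ¬∃ U W : Submodule Λ M, U ≠ ⊥ ∧ W ≠ ⊥ ∧ IsCompl U W

/-- A module `M` over an `R`-algebra `Λ` is `R`-torsionfree if nonzero elements of `R` act on
nonzero elements of `M` without producing `0`. -/
def RTorsionFree (R : Type w) [CommRing R] (Λ : Type u) [Ring Λ] [Algebra R Λ]
    (M : Type v) [AddCommGroup M] [Module Λ M] : Prop :=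
  ∀ (m : M) (r : R), m ≠ 0 → r ≠ 0 → algebraMap R Λ r • m ≠ 0

/-- The submodule `M·r` of all multiples of a central scalar `r : R` in `M`. -/
def smulRange (R : Type w) [CommRing R] (Λ : Type u) [Ring Λ] [Algebra R Λ]
    (M : Type v) [AddCommGroup M] [Module Λ M] (r : R) : Submodule Λ M where
  carrier := Set.range fun m : M => algebraMap R Λ r • m
  add_mem' := by
    rintro _ _ ⟨a, rfl⟩ ⟨b, rfl⟩
    exact ⟨a + b, by dsimp only; rw [smul_add]⟩
  zero_mem' := ⟨0, by dsimp only; rw [smul_zero]⟩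
  smul_mem' := by
    rintro c _ ⟨a, rfl⟩
    exact ⟨c • a, by dsimp only; rw [smul_smul, smul_smul, Algebra.commutes]⟩

/-- The additive subgroup `M·I` of finite sums of elements `ρ s • m` with `s ∈ I`, `m ∈ M`. -/
def idealSmul {R : Type w} [CommRing R] {Λ : Type u} [Ring Λ] (ρ : R →+* Λ) (I : Ideal R)
    (M : Type v) [AddCommGroup M] [Module Λ M] : AddSubgroup M :=
  AddSubgroup.closure {x | ∃ s ∈ I, ∃ m : M, x = ρ s • m}

/-- `Λ` is an `R`-order in the finite-dimensional `Q`-algebra `A`, realized via the embedding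
`i : Λ →ₐ[R] A`: this says that `Λ` is (isomorphic to) a subring of `A` whose centre contains
`R` (the `R`-algebra structure), which is finitely generated as an `R`-module, and such that
`Q·Λ = A`. -/
structure IsOrderIn (R : Type*) [CommRing R] (Q : Type*) [Field Q] [Algebra R Q]
    (A : Type*) [Ring A] [Algebra Q A] [Algebra R A] [IsScalarTower R Q A]
    (Λ : Type*) [Ring Λ] [Algebra R Λ] (i : Λ →ₐ[R] A) : Prop where
  fin : Module.Finite R Λ
  inj : Function.Injective i
  span : Submodule.span Q (Set.range i) = ⊤

/-- A `Λ`-lattice: a finitely generated `R`-torsionfree `Λ`-module. -/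
def IsLatticeModule (R : Type w) [CommRing R] (Λ : Type u) [Ring Λ] [Algebra R Λ]
    (M : Type v) [AddCommGroup M] [Module Λ M] : Prop :=
  Module.Finite Λ M ∧ RTorsionFree R Λ M

/-- The solution set in the (right) module `M` of the system of linear equations (pp-formula in
one free variable) determined by the `(1+l) × n` matrix `T`:
`sol_T(M) = {m | ∃ y, (m,y)·T = 0}`. -/
def solSet {Λ : Type u} [Ring Λ] {l n : ℕ} (T : Matrix (Fin (l + 1)) (Fin n) Λ)
    (M : Type v) [AddCommGroup M] [Module Λ M] : Set M :=
  {m | ∃ y : Fin l → M, ∀ j : Fin n, T 0 j • m + ∑ k : Fin l, T k.succ j • y k = 0}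

/-- `T ≤ T'` : the solution set of `T` is contained in that of `T'` in every `R`-torsionfree
`Λ`-module. -/
def MatLE (R : Type*) [CommRing R] (Λ : Type u) [Ring Λ] [Algebra R Λ]
    {l n l' n' : ℕ} (T : Matrix (Fin (l + 1)) (Fin n) Λ)
    (T' : Matrix (Fin (l' + 1)) (Fin n') Λ) : Prop :=
  ∀ (M : Type v) [AddCommGroup M] [Module Λ M], RTorsionFree R Λ M → solSet T M ⊆ solSet T' M

/-- `T ∈ D` : in every `R`-torsionfree `Λ`-module `M`, the solution set of `T` contains `M·p`. -/
def MatD (R : Type*) [CommRing R] (Λ : Type u) [Ring Λ] [Algebra R Λ] (p : R)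
    {l n : ℕ} (T : Matrix (Fin (l + 1)) (Fin n) Λ) : Prop :=
  ∀ (M : Type v) [AddCommGroup M] [Module Λ M], RTorsionFree R Λ M →
    ∀ m : M, algebraMap R Λ p • m ∈ solSet T M

/-- `sol*_T(N)` relative to `r` : those `m ∈ N` for which there is `y` with all the entries of
the row vector `(m,y)·T` lying in `N·r`. -/
def solModSet {R : Type*} [CommRing R] {Λ : Type u} [Ring Λ] [Algebra R Λ]
    {l n : ℕ} (T : Matrix (Fin (l + 1)) (Fin n) Λ)
    (N : Type v) [AddCommGroup N] [Module Λ N] (r : R) : Set N :=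
  {m | ∃ y : Fin l → N, ∀ j : Fin n, ∃ x : N,
    T 0 j • m + ∑ k : Fin l, T k.succ j • y k = algebraMap R Λ r • x}

/-- `R'` is (up to isomorphism) the `π`-adic completion of `R`: it is `π`-adically separated
and complete, `R` is dense in it, and `R → R'` induces isomorphisms `R/π^k ≅ R'/π^k R'`. -/
structure IsPiAdicCompletion (R : Type*) [CommRing R] (π : R)
    (R' : Type*) [CommRing R'] [Algebra R R'] : Prop where
  haus : ∀ x : R', (∀ k : ℕ, ∃ y : R', x = algebraMap R R' (π ^ k) * y) → x = 0
  complete : ∀ f : ℕ → R',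
    (∀ m k : ℕ, m ≤ k → ∃ y : R', f k - f m = algebraMap R R' (π ^ m) * y) →
    ∃ x : R', ∀ k : ℕ, ∃ y : R', x - f k = algebraMap R R' (π ^ k) * y
  dense : ∀ (x : R') (k : ℕ), ∃ (r : R) (y : R'),
    x - algebraMap R R' r = algebraMap R R' (π ^ k) * y
  inj : ∀ (r : R) (k : ℕ),
    (∃ y : R', algebraMap R R' r = algebraMap R R' (π ^ k) * y) → ∃ c : R, r = π ^ k * c

section MarandaAux

variable {R : Type w} [CommRing R] {Λ : Type u} [Ring Λ] [Algebra R Λ]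

lemma central_smul_comm {M : Type v} [AddCommGroup M] [Module Λ M]
    (r : R) (c : Λ) (x : M) :
    algebraMap R Λ r • c • x = c • algebraMap R Λ r • x := by
  rw [smul_smul, smul_smul, Algebra.commutes]

lemma mem_smulRange {M : Type v} [AddCommGroup M] [Module Λ M] {r : R} {x : M} :
    x ∈ smulRange R Λ M r ↔ ∃ m : M, algebraMap R Λ r • m = x := Iff.rfl

lemma tf_cancel {M : Type v} [AddCommGroup M] [Module Λ M]
    (hM : RTorsionFree R Λ M) {r : R} (hr : r ≠ 0) {x : M}
    (hx : algebraMap R Λ r • x = 0) : x = 0 := by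
  by_contra h
  exact hM x r h hr hx

lemma solSet_mem_iff {l n : ℕ} (T : Matrix (Fin (l + 1)) (Fin n) Λ)
    {M : Type v} [AddCommGroup M] [Module Λ M] {m : M} :
    m ∈ solSet T M ↔ ∃ w : Fin (l + 1) → M, w 0 = m ∧
      ∀ j : Fin n, ∑ i : Fin (l + 1), T i j • w i = 0 := by
  constructor
  · rintro ⟨y, hy⟩
    refine ⟨Fin.cons m y, Fin.cons_zero _ _, fun j => ?_⟩
    rw [Fin.sum_univ_succ]
    simpa using hy j
  · rintro ⟨w, rfl, hw⟩
    refine ⟨fun i => w i.succ, fun j => ?_⟩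
    have := hw j
    rwa [Fin.sum_univ_succ] at this

lemma solSet_map {l n : ℕ} (T : Matrix (Fin (l + 1)) (Fin n) Λ)
    {M : Type v} [AddCommGroup M] [Module Λ M]
    {M' : Type v} [AddCommGroup M'] [Module Λ M'] (f : M →ₗ[Λ] M')
    {m : M} (hm : m ∈ solSet T M) : f m ∈ solSet T M' := by
  obtain ⟨y, hy⟩ := hm
  refine ⟨fun i => f (y i), fun j => ?_⟩
  have := congrArg f (hy j)
  simpa [map_add, map_sum, map_smul] using this

lemma solSet_add {l n : ℕ} (T : Matrix (Fin (l + 1)) (Fin n) Λ)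
    {M : Type v} [AddCommGroup M] [Module Λ M]
    {m₁ m₂ : M} (h₁ : m₁ ∈ solSet T M) (h₂ : m₂ ∈ solSet T M) :
    m₁ + m₂ ∈ solSet T M := by
  obtain ⟨y₁, hy₁⟩ := h₁
  obtain ⟨y₂, hy₂⟩ := h₂
  refine ⟨y₁ + y₂, fun j => ?_⟩
  simp only [Pi.add_apply, smul_add, Finset.sum_add_distrib]
  rw [add_add_add_comm, hy₁ j, hy₂ j, add_zero]

lemma mkQ_smul_self {M : Type v} [AddCommGroup M] [Module Λ M] (r : R) (u : M) :
    (smulRange R Λ M r).mkQ (algebraMap R Λ r • u) = 0 := by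
  rw [Submodule.mkQ_apply, Submodule.Quotient.mk_eq_zero]
  exact ⟨u, rfl⟩

lemma quot_smul_zero {M : Type v} [AddCommGroup M] [Module Λ M] (r : R)
    (v : M ⧸ smulRange R Λ M r) : algebraMap R Λ r • v = 0 := by
  obtain ⟨u, rfl⟩ := (smulRange R Λ M r).mkQ_surjective v
  rw [← map_smul]
  exact mkQ_smul_self r u

lemma solModSet_iff_mkQ {l n : ℕ} (T : Matrix (Fin (l + 1)) (Fin n) Λ)
    {M : Type v} [AddCommGroup M] [Module Λ M] (r : R) {m : M} :
    m ∈ solModSet T M r ↔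
      (smulRange R Λ M r).mkQ m ∈ solSet T (M ⧸ smulRange R Λ M r) := by
  constructor
  · rintro ⟨y, hy⟩
    refine ⟨fun i => (smulRange R Λ M r).mkQ (y i), fun j => ?_⟩
    obtain ⟨x, hx⟩ := hy j
    have := congrArg (smulRange R Λ M r).mkQ hx
    simpa [map_add, map_sum, map_smul, quot_smul_zero] using this
  · rintro ⟨y, hy⟩
    choose z hz using fun i => (smulRange R Λ M r).mkQ_surjective (y i)
    refine ⟨z, fun j => ?_⟩
    have hj : (smulRange R Λ M r).mkQ (T 0 j • m + ∑ i : Fin l, T i.succ j • z i) = 0 := by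
      have := hy j
      simp only [map_add, map_sum, map_smul, hz]
      exact this
    rw [Submodule.mkQ_apply, Submodule.Quotient.mk_eq_zero] at hj
    obtain ⟨x, hx⟩ := hj
    exact ⟨x, hx.symm⟩

end MarandaAux

section ComboAux

/-- The linear map `v ↦ ∑ i, v i • u i`. -/
def combo (Λ : Type u) [Ring Λ] {p : ℕ} {M : Type v} [AddCommGroup M] [Module Λ M]
    (u : Fin p → M) : (Fin p → Λ) →ₗ[Λ] M where
  toFun v := ∑ i, v i • u i
  map_add' a b := by simp [add_smul, Finset.sum_add_distrib]
  map_smul' c v := by simp [Pi.smul_apply, smul_eq_mul, mul_smul, Finset.smul_sum]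

variable {Λ : Type u} [Ring Λ]

lemma combo_apply {p : ℕ} {M : Type v} [AddCommGroup M] [Module Λ M]
    (u : Fin p → M) (v : Fin p → Λ) : combo Λ u v = ∑ i, v i • u i := rfl

lemma combo_single {p : ℕ} {M : Type v} [AddCommGroup M] [Module Λ M]
    (u : Fin p → M) (i : Fin p) :
    combo Λ u (Pi.single i 1 : Fin p → Λ) = u i := by
  rw [combo_apply]
  simp [Pi.single_apply, ite_smul, Finset.sum_ite_eq']

lemma pi_eq_sum_single {p : ℕ} (v : Fin p → Λ) :
    ∑ i, v i • (Pi.single i 1 : Fin p → Λ) = v := by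
  funext j
  rw [Finset.sum_apply]
  simp [Pi.single_apply, Pi.smul_apply, smul_eq_mul, mul_ite, Finset.sum_ite_eq]

end ComboAux

section SatAux

variable (R : Type w) [CommRing R] [IsDomain R] {Λ : Type u} [Ring Λ] [Algebra R Λ]

/-- The `R`-saturation of a `Λ`-submodule. -/
def satSub {F : Type v} [AddCommGroup F] [Module Λ F]
    (U : Submodule Λ F) : Submodule Λ F where
  carrier := {v | ∃ r : R, r ≠ 0 ∧ algebraMap R Λ r • v ∈ U}
  zero_mem' := ⟨1, one_ne_zero, by simpa using U.zero_mem⟩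
  add_mem' := by
    rintro a b ⟨r, hr, ha⟩ ⟨s, hs, hb⟩
    refine ⟨r * s, mul_ne_zero hr hs, ?_⟩
    have h1 : algebraMap R Λ (r * s) • (a + b) =
        algebraMap R Λ s • (algebraMap R Λ r • a) +
        algebraMap R Λ r • (algebraMap R Λ s • b) := by
      rw [smul_add, smul_smul, smul_smul, ← map_mul, ← map_mul, mul_comm s r]
    rw [h1]
    exact U.add_mem (U.smul_mem _ ha) (U.smul_mem _ hb)
  smul_mem' := by
    rintro c a ⟨r, hr, ha⟩
    exact ⟨r, hr, by rw [central_smul_comm]; exact U.smul_mem c ha⟩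

lemma mem_satSub {F : Type v} [AddCommGroup F] [Module Λ F]
    {U : Submodule Λ F} {v : F} :
    v ∈ satSub R U ↔ ∃ r : R, r ≠ 0 ∧ algebraMap R Λ r • v ∈ U := Iff.rfl

lemma le_satSub {F : Type v} [AddCommGroup F] [Module Λ F]
    (U : Submodule Λ F) : U ≤ satSub R U :=
  fun v hv => ⟨1, one_ne_zero, by simpa using hv⟩

end SatAux
section ExtMatrix

variable {Λ : Type u} [Ring Λ]

/-- Extend a matrix by `n` new rows carrying `c` times a delta. -/
def extMatrix {l n : ℕ} (T : Matrix (Fin (l + 1)) (Fin n) Λ) (c : Λ) :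
    Matrix (Fin ((l + n) + 1)) (Fin n) Λ := fun i j =>
  Fin.cases (T 0 j) (fun i' =>
    Fin.addCases (fun a : Fin l => T a.succ j) (fun b : Fin n => if b = j then c else 0) i') i

lemma extMatrix_sum {l n : ℕ} (T : Matrix (Fin (l + 1)) (Fin n) Λ) (c : Λ)
    {M : Type v} [AddCommGroup M] [Module Λ M] (m : M) (z : Fin (l + n) → M) (j : Fin n) :
    extMatrix T c 0 j • m + ∑ i : Fin (l + n), extMatrix T c i.succ j • z i
      = (T 0 j • m + ∑ a : Fin l, T a.succ j • z (Fin.castAdd n a)) + c • z (Fin.natAdd l j) := by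
  have h0 : extMatrix T c 0 j = T 0 j := rfl
  have hsum : ∑ i : Fin (l + n), extMatrix T c i.succ j • z i
      = ∑ a : Fin l, T a.succ j • z (Fin.castAdd n a)
        + ∑ b : Fin n, (if b = j then c else 0) • z (Fin.natAdd l b) := by
    rw [Fin.sum_univ_add (f := fun i : Fin (l + n) => extMatrix T c i.succ j • z i)]
    congr 1
    · refine Finset.sum_congr rfl fun a _ => ?_
      simp only [extMatrix, Fin.cases_succ, Fin.addCases_left]
    · refine Finset.sum_congr rfl fun b _ => ?_
      simp only [extMatrix, Fin.cases_succ, Fin.addCases_right]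
  rw [h0, hsum]
  have hdelta : ∑ b : Fin n, (if b = j then c else 0) • z (Fin.natAdd l b)
      = c • z (Fin.natAdd l j) := by
    simp [ite_smul, Finset.sum_ite_eq']
  rw [hdelta, add_assoc]

end ExtMatrix

section ExtMatrixSol

variable {R : Type w} [CommRing R] {Λ : Type u} [Ring Λ] [Algebra R Λ]

lemma solSet_extMatrix {l n : ℕ} (T : Matrix (Fin (l + 1)) (Fin n) Λ) (r : R)
    {M : Type v} [AddCommGroup M] [Module Λ M] :
    solSet (extMatrix T (-(algebraMap R Λ r))) M = solModSet T M r := by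
  ext m
  constructor
  · rintro ⟨z, hz⟩
    refine ⟨fun a => z (Fin.castAdd n a), fun j => ⟨z (Fin.natAdd l j), ?_⟩⟩
    have := hz j
    rw [extMatrix_sum] at this
    rw [← add_neg_eq_zero]
    rw [← neg_smul]
    exact this
  · rintro ⟨y, hy⟩
    choose x hx using hy
    refine ⟨Fin.addCases y x, fun j => ?_⟩
    rw [extMatrix_sum]
    have h1 : ∀ a : Fin l, Fin.addCases (motive := fun _ => M) y x (Fin.castAdd n a) = y a :=
      fun a => Fin.addCases_left a
    have h2 : Fin.addCases (motive := fun _ => M) y x (Fin.natAdd l j) = x j :=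
      Fin.addCases_right j
    rw [h2, Finset.sum_congr rfl fun a _ => by rw [h1 a]]
    rw [neg_smul, ← hx j, add_neg_cancel]
end ExtMatrixSol
section Maranda

variable {R : Type u} [CommRing R] [IsDomain R] {Λ : Type u} [Ring Λ] [Algebra R Λ]

set_option maxHeartbeats 1000000 in
lemma maranda_onto [IsNoetherianRing Λ]
    {π : R} (hπ0 : π ≠ 0) {k₀ k : ℕ} (hk : k₀ ≤ k)
    (hk₀ : ∀ (N' X L' : Type u) [AddCommGroup N'] [Module Λ N'] [AddCommGroup X] [Module Λ X]
      [AddCommGroup L'] [Module Λ L'],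
      IsLatticeModule R Λ N' → IsLatticeModule R Λ X → IsLatticeModule R Λ L' →
      ∀ (e : N' →ₗ[Λ] X) (p : X →ₗ[Λ] L'), Function.Injective e → Function.Surjective p →
        LinearMap.range e = LinearMap.ker p →
        ∃ h : L' →ₗ[Λ] X, ∀ x : L', p (h x) = algebraMap R Λ (π ^ k₀) • x)
    {N : Type u} [AddCommGroup N] [Module Λ N] (hN : RTorsionFree R Λ N)
    {l n : ℕ} (T : Matrix (Fin (l + 1)) (Fin n) Λ)
    (hT : (Set.range fun m : N => algebraMap R Λ (π ^ (k - k₀)) • m) ⊆ solSet T N) :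
    ∃ (l' n' : ℕ) (S : Matrix (Fin (l' + 1)) (Fin n') Λ),
      (Set.range fun m : (N ⧸ smulRange R Λ N (π ^ k)) =>
          algebraMap R Λ (π ^ (k - k₀)) • m) ⊆
        solSet S (N ⧸ smulRange R Λ N (π ^ k)) ∧
      solModSet S N (π ^ k) = solSet T N := by
  classical
  set U : Submodule Λ (Fin (l + 1) → Λ) :=
    Submodule.span Λ (Set.range fun j : Fin n => fun i => T i j) with hU
  obtain ⟨s, hs⟩ : (satSub R U).FG := IsNoetherian.noetherian _
  set gv : Fin s.card → (Fin (l + 1) → Λ) :=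
    fun j => ((s.equivFin.symm j : ↥s) : Fin (l + 1) → Λ) with hgv
  have hgmem : ∀ j, gv j ∈ satSub R U := by
    intro j
    rw [← hs]
    exact Submodule.subset_span (Finset.mem_coe.2 (s.equivFin.symm j).2)
  have hspan : Submodule.span Λ (Set.range gv) = satSub R U := by
    rw [← hs]
    congr 1
    ext v
    constructor
    · rintro ⟨j, rfl⟩
      exact Finset.mem_coe.2 (s.equivFin.symm j).2
    · intro hv
      exact ⟨s.equivFin ⟨v, hv⟩, by simp [hgv]⟩
  -- T-solutions are gv-solutions in torsionfree modules (and conversely)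
  have hTsubS : ∀ m : N, m ∈ solSet T N → m ∈ solSet (fun i j => gv j i) N := by
    intro m hm
    rw [solSet_mem_iff] at hm
    refine (solSet_mem_iff _).2 ?_
    obtain ⟨w, hw0, hw⟩ := hm
    refine ⟨w, hw0, fun j' => ?_⟩
    have hker : U ≤ LinearMap.ker (combo Λ w) := by
      rw [hU]
      refine Submodule.span_le.2 ?_
      rintro _ ⟨j, rfl⟩
      simpa [LinearMap.mem_ker, combo_apply] using hw j
    obtain ⟨r, hr, hrU⟩ := hgmem j'
    have h0 : algebraMap R Λ r • combo Λ w (gv j') = 0 := by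
      have := hker hrU
      rwa [LinearMap.mem_ker, map_smul] at this
    have := tf_cancel hN hr h0
    simpa [combo_apply] using this
  have hSsubT : ∀ m : N, m ∈ solSet (fun i j => gv j i) N → m ∈ solSet T N := by
    intro m hm
    replace hm := (solSet_mem_iff _).1 hm
    rw [solSet_mem_iff]
    obtain ⟨w, hw0, hw⟩ := hm
    refine ⟨w, hw0, fun j => ?_⟩
    have hker : satSub R U ≤ LinearMap.ker (combo Λ w) := by
      rw [← hspan]
      refine Submodule.span_le.2 ?_
      rintro _ ⟨j', rfl⟩
      simpa [LinearMap.mem_ker, combo_apply] using hw j'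
    have hcol : (fun i => T i j) ∈ U := Submodule.subset_span ⟨j, rfl⟩
    have := hker (le_satSub R U hcol)
    simpa [LinearMap.mem_ker, combo_apply] using this
  refine ⟨l, s.card, fun i j => gv j i, ?_, ?_⟩
  · rintro _ ⟨v, rfl⟩
    obtain ⟨m0, rfl⟩ := (smulRange R Λ N (π ^ k)).mkQ_surjective v
    have h1 : algebraMap R Λ (π ^ (k - k₀)) • m0 ∈ solSet T N := hT ⟨m0, rfl⟩
    have h3 := solSet_map (fun i j => gv j i) (smulRange R Λ N (π ^ k)).mkQ (hTsubS _ h1)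
    rwa [map_smul] at h3
  refine Set.Subset.antisymm ?_ ?_
  swap
  · intro m hm
    obtain ⟨y, hy⟩ := hTsubS m hm
    exact ⟨y, fun j' => ⟨0, by rw [smul_zero]; exact hy j'⟩⟩
  -- the Maranda lifting
  intro m hm
  obtain ⟨y, hy⟩ := hm
  choose x hx using hy
  set w : Fin (l + 1) → N := Fin.cons m y with hwdef
  have hw : ∀ j', ∑ i, gv j' i • w i = algebraMap R Λ (π ^ k) • x j' := by
    intro j'
    rw [Fin.sum_univ_succ]
    simpa [hwdef] using hx j'
  set W : Submodule Λ N := Submodule.span Λ (Set.range w ∪ Set.range x) with hWdef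
  have hwW : ∀ i, w i ∈ W := fun i => Submodule.subset_span (Or.inl ⟨i, rfl⟩)
  have hxW : ∀ j', x j' ∈ W := fun j' => Submodule.subset_span (Or.inr ⟨j', rfl⟩)
  set wW : Fin (l + 1) → ↥W := fun i => ⟨w i, hwW i⟩ with hwWdef
  have finW : Module.Finite Λ ↥W :=
    Module.Finite.iff_fg.2 (Submodule.fg_span ((Set.finite_range w).union (Set.finite_range x)))
  have tfW : RTorsionFree R Λ ↥W := by
    intro a r ha hr hcon
    refine hN (a : N) r (fun hc => ha (Subtype.ext hc)) hr ?_
    have := congrArg (Submodule.subtype W) hcon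
    simpa using this
  have finL : Module.Finite Λ ((Fin (l + 1) → Λ) ⧸ satSub R U) :=
    Module.Finite.of_surjective (satSub R U).mkQ (satSub R U).mkQ_surjective
  have tfL : RTorsionFree R Λ ((Fin (l + 1) → Λ) ⧸ satSub R U) := by
    intro a r ha hr hcon
    obtain ⟨v, rfl⟩ := (satSub R U).mkQ_surjective a
    rw [← map_smul, Submodule.mkQ_apply, Submodule.Quotient.mk_eq_zero] at hcon
    obtain ⟨r', hr', hU'⟩ := hcon
    refine ha ?_
    rw [Submodule.mkQ_apply, Submodule.Quotient.mk_eq_zero]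
    exact ⟨r' * r, mul_ne_zero hr' hr, by rwa [map_mul, mul_smul]⟩
  set qW := (smulRange R Λ (↥W) (π ^ k)).mkQ with hqW
  set hWmap := combo Λ wW with hhW
  have hWcol : ∀ j', hWmap (gv j') = algebraMap R Λ (π ^ k) • (⟨x j', hxW j'⟩ : ↥W) := by
    intro j'
    apply Subtype.ext
    have h1 : ((hWmap (gv j') : ↥W) : N) = ∑ i, gv j' i • w i := by
      rw [hhW, combo_apply]
      simp [hwWdef]
    rw [h1, hw j']
    simp
  have hker : satSub R U ≤ LinearMap.ker (qW ∘ₗ hWmap) := by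
    rw [← hspan]
    refine Submodule.span_le.2 ?_
    rintro _ ⟨j', rfl⟩
    simp only [SetLike.mem_coe, LinearMap.mem_ker, LinearMap.comp_apply, hWcol j', hqW]
    exact mkQ_smul_self _ _
  set gbar := Submodule.liftQ (satSub R U) (qW ∘ₗ hWmap) hker with hgbar
  have hgbar_apply : ∀ v, gbar ((satSub R U).mkQ v) = qW (hWmap v) := by
    intro v
    rw [hgbar, Submodule.mkQ_apply, Submodule.liftQ_apply, LinearMap.comp_apply]
  set Xs : Submodule Λ (((Fin (l + 1) → Λ) ⧸ satSub R U) × ↥W) :=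
    LinearMap.ker (gbar ∘ₗ LinearMap.fst Λ _ _ - qW ∘ₗ LinearMap.snd Λ _ _) with hXs
  have memX : ∀ z : ((Fin (l + 1) → Λ) ⧸ satSub R U) × ↥W, z ∈ Xs ↔ gbar z.1 = qW z.2 := by
    intro z
    rw [hXs]
    simp [LinearMap.mem_ker, sub_eq_zero]
  haveI := finL
  haveI := finW
  haveI hNoeL : IsNoetherian Λ ((Fin (l + 1) → Λ) ⧸ satSub R U) :=
    isNoetherian_of_isNoetherianRing_of_finite Λ _
  haveI hNoeW : IsNoetherian Λ ↥W := isNoetherian_of_isNoetherianRing_of_finite Λ _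
  have finX : Module.Finite Λ ↥Xs := Module.Finite.iff_fg.2 (IsNoetherian.noetherian Xs)
  have tfX : RTorsionFree R Λ ↥Xs := by
    intro z r hz hr hcon
    have hcoe : algebraMap R Λ r • (z : ((Fin (l + 1) → Λ) ⧸ satSub R U) × ↥W) = 0 := by
      have := congrArg (Submodule.subtype Xs) hcon
      simpa using this
    have h1 : algebraMap R Λ r • (z : ((Fin (l + 1) → Λ) ⧸ satSub R U) × ↥W).1 = 0 := by
      have := congrArg Prod.fst hcoe
      simpa using this
    have h2 : algebraMap R Λ r • (z : ((Fin (l + 1) → Λ) ⧸ satSub R U) × ↥W).2 = 0 := by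
      have := congrArg Prod.snd hcoe
      simpa using this
    have e1 : (z : ((Fin (l + 1) → Λ) ⧸ satSub R U) × ↥W).1 = 0 := by
      by_contra hc; exact tfL _ r hc hr h1
    have e2 : (z : ((Fin (l + 1) → Λ) ⧸ satSub R U) × ↥W).2 = 0 := by
      by_contra hc; exact tfW _ r hc hr h2
    exact hz (Subtype.ext (Prod.ext e1 e2))
  set eMap : ↥W →ₗ[Λ] ↥Xs :=
    { toFun := fun u => ⟨(0, algebraMap R Λ (π ^ k) • u), by
        rw [memX]
        simp only [map_zero, hqW]
        exact (mkQ_smul_self _ _).symm⟩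
      map_add' := fun a b => by
        apply Subtype.ext
        show ((0 : (Fin (l + 1) → Λ) ⧸ satSub R U), algebraMap R Λ (π ^ k) • (a + b))
          = (0, algebraMap R Λ (π ^ k) • a) + (0, algebraMap R Λ (π ^ k) • b)
        rw [Prod.mk_add_mk, smul_add, add_zero]
      map_smul' := fun c u => by
        apply Subtype.ext
        show ((0 : (Fin (l + 1) → Λ) ⧸ satSub R U), algebraMap R Λ (π ^ k) • (c • u))
          = c • (0, algebraMap R Λ (π ^ k) • u)
        rw [Prod.smul_mk, smul_zero, central_smul_comm] } with heMap
  set pMap : ↥Xs →ₗ[Λ] ((Fin (l + 1) → Λ) ⧸ satSub R U) :=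
    (LinearMap.fst Λ _ _) ∘ₗ Xs.subtype with hpMap
  have einj : Function.Injective eMap := by
    intro a b hab
    have h1 : algebraMap R Λ (π ^ k) • a = algebraMap R Λ (π ^ k) • b := by
      have := congrArg (fun z : ↥Xs => (z : ((Fin (l + 1) → Λ) ⧸ satSub R U) × ↥W).2) hab
      simpa [heMap] using this
    have h2 : algebraMap R Λ (π ^ k) • (a - b) = 0 := by rw [smul_sub, h1, sub_self]
    exact sub_eq_zero.1 (tf_cancel tfW (pow_ne_zero _ hπ0) h2)
  have psurj : Function.Surjective pMap := by
    intro a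
    obtain ⟨v, rfl⟩ := (satSub R U).mkQ_surjective a
    exact ⟨⟨((satSub R U).mkQ v, hWmap v), (memX _).2 (hgbar_apply v)⟩, rfl⟩
  have hrange : LinearMap.range eMap = LinearMap.ker pMap := by
    apply le_antisymm
    · rintro _ ⟨u, rfl⟩
      simp [LinearMap.mem_ker, hpMap, heMap]
    · rintro ⟨⟨a, u⟩, hz⟩ hmem
      have hmem' : a = 0 := by
        simpa [hpMap, LinearMap.mem_ker] using hmem
      have hthis : gbar a = qW u := (memX (a, u)).1 hz
      have hq : qW u = 0 := by rw [← hthis, hmem', map_zero]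
      rw [hqW, Submodule.mkQ_apply, Submodule.Quotient.mk_eq_zero] at hq
      obtain ⟨u', hu'⟩ := hq
      exact ⟨u', Subtype.ext (Prod.ext hmem'.symm hu')⟩
  obtain ⟨hbar, hhbar⟩ := hk₀ ↥W ↥Xs ((Fin (l + 1) → Λ) ⧸ satSub R U)
    ⟨finW, tfW⟩ ⟨finX, tfX⟩ ⟨finL, tfL⟩ eMap pMap einj psurj hrange
  set g : ((Fin (l + 1) → Λ) ⧸ satSub R U) →ₗ[Λ] ↥W :=
    (LinearMap.snd Λ _ _) ∘ₗ Xs.subtype ∘ₗ hbar with hgdef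
  have hg : ∀ a, qW (g a) = algebraMap R Λ (π ^ k₀) • gbar a := by
    intro a
    have hmem := (memX ((hbar a : ↥Xs) : ((Fin (l + 1) → Λ) ⧸ satSub R U) × ↥W)).1 (hbar a).2
    have hfst : ((hbar a : ↥Xs) : ((Fin (l + 1) → Λ) ⧸ satSub R U) × ↥W).1
        = algebraMap R Λ (π ^ k₀) • a := hhbar a
    calc qW (g a) = gbar (((hbar a : ↥Xs) : ((Fin (l + 1) → Λ) ⧸ satSub R U) × ↥W).1) := hmem.symm
    _ = algebraMap R Λ (π ^ k₀) • gbar a := by rw [hfst, map_smul]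
  have hdiv : ∀ i : Fin (l + 1), ∃ u : ↥W,
      algebraMap R Λ (π ^ k) • u
        = g ((satSub R U).mkQ (Pi.single i 1)) - algebraMap R Λ (π ^ k₀) • wW i := by
    intro i
    have h1 : gbar ((satSub R U).mkQ (Pi.single i 1)) = qW (wW i) := by
      rw [hgbar_apply]
      congr 1
      rw [hhW]
      exact combo_single wW i
    have h2 : qW (g ((satSub R U).mkQ (Pi.single i 1)) - algebraMap R Λ (π ^ k₀) • wW i) = 0 := by
      rw [map_sub, hg, h1, map_smul, sub_self]
    rw [hqW, Submodule.mkQ_apply, Submodule.Quotient.mk_eq_zero] at h2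
    exact h2
  choose uu huu using hdiv
  set w' : Fin (l + 1) → ↥W := fun i => wW i + algebraMap R Λ (π ^ (k - k₀)) • uu i with hw'
  have hpow : algebraMap R Λ (π ^ k₀) * algebraMap R Λ (π ^ (k - k₀)) = algebraMap R Λ (π ^ k) := by
    rw [← map_mul, ← pow_add, Nat.add_sub_cancel' hk]
  have hw'k : ∀ i, algebraMap R Λ (π ^ k₀) • w' i = g ((satSub R U).mkQ (Pi.single i 1)) := by
    intro i
    rw [hw']
    show algebraMap R Λ (π ^ k₀) • (wW i + algebraMap R Λ (π ^ (k - k₀)) • uu i) = _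
    rw [smul_add, smul_smul, hpow, huu i]
    abel
  have hsolW : ∀ j', ∑ i, gv j' i • w' i = (0 : ↥W) := by
    intro j'
    apply tf_cancel tfW (pow_ne_zero k₀ hπ0)
    rw [Finset.smul_sum]
    rw [Finset.sum_congr rfl (fun i _ => by rw [central_smul_comm, hw'k i])]
    have hrepr : (satSub R U).mkQ (gv j')
        = ∑ i, gv j' i • (satSub R U).mkQ (Pi.single i 1 : Fin (l + 1) → Λ) := by
      conv_lhs => rw [← pi_eq_sum_single (gv j')]
      rw [map_sum]
      exact Finset.sum_congr rfl fun i _ => map_smul _ _ _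
    have hgoal : ∑ i, gv j' i • g ((satSub R U).mkQ (Pi.single i 1))
        = g ((satSub R U).mkQ (gv j')) := by
      rw [hrepr, map_sum]
      exact (Finset.sum_congr rfl fun i _ => map_smul g _ _).symm
    rw [hgoal]
    have hz0 : (satSub R U).mkQ (gv j') = 0 := by
      rw [Submodule.mkQ_apply, Submodule.Quotient.mk_eq_zero]
      exact hgmem j'
    rw [hz0, map_zero]
  have hwsol : ((w' 0 : ↥W) : N) ∈ solSet (fun i j => gv j i) N := by
    refine (solSet_mem_iff _).2 ?_
    refine ⟨fun i => ((w' i : ↥W) : N), rfl, fun j' => ?_⟩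
    have := congrArg (Submodule.subtype W) (hsolW j')
    simpa using this
  have hu0 : ((w' 0 : ↥W) : N) = m + algebraMap R Λ (π ^ (k - k₀)) • ((uu 0 : ↥W) : N) := by
    have h1 : w 0 = m := by rw [hwdef]; exact Fin.cons_zero _ _
    simp [hw', hwWdef, h1]
  have hfin : m = ((w' 0 : ↥W) : N) + algebraMap R Λ (π ^ (k - k₀)) • (-((uu 0 : ↥W) : N)) := by
    rw [hu0, smul_neg]
    abel
  rw [hfin]
  exact solSet_add T (hSsubT _ hwsol) (hT ⟨-((uu 0 : ↥W) : N), rfl⟩)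

end Maranda
/-- Maranda's theorem for pp-definable subgroups. With `N_k = N/Nπ^k` and
`Λ_k = Λ/π^kΛ`, the assignment `sol_S(N_k) ↦ sol*_S(N)` is a well-defined,
inclusion-preserving bijection, with inclusion-preserving inverse, from the set of subgroups
of `N_k` of the form `sol_S(N_k)` (`S` a matrix over `Λ_k`) containing `π^{k-k₀}·N_k` onto
the set of subgroups of `N` of the form `sol_T(N)` (`T` a matrix over `Λ`) containing
`π^{k-k₀}·N`. Matrices over `Λ_k` are represented here by entrywise lifts to matrices over
`Λ` (every matrix over `Λ_k` arises this way); for such a lift `T` one has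
`sol_S(N_k) = solSet T N_k` and `sol*_S(N) = solModSet T N (π^k)`, and the first conjunct
below states precisely that `sol*_S(N)` does not depend on the chosen lift. -/
theorem statement_13
    (R : Type u) [CommRing R] [IsDomain R] [IsDiscreteValuationRing R]
    (π : R) (hπ : IsLocalRing.maximalIdeal R = Ideal.span {π})
    [IsAdicComplete (IsLocalRing.maximalIdeal R) R]
    (Q : Type u) [Field Q] [Algebra R Q] [IsFractionRing R Q]
    (A : Type u) [Ring A] [Algebra Q A] [Algebra R A] [IsScalarTower R Q A]
    [FiniteDimensional Q A] [IsSemisimpleRing A]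
    (hsep : ∀ (K : Type u) [Field K] [Algebra Q K], IsSemisimpleRing (K ⊗[Q] A))
    (Λ : Type u) [Ring Λ] [Algebra R Λ] (i : Λ →ₐ[R] A) (hΛ : IsOrderIn R Q A Λ i)
    (k₀ : ℕ)
    -- `π^{k₀}·Ext¹(L',N') = 0` for all `Λ`-lattices `L'`, `N'`:
    (hk₀ : ∀ (N' X L' : Type u) [AddCommGroup N'] [Module Λ N'] [AddCommGroup X] [Module Λ X]
      [AddCommGroup L'] [Module Λ L'],
      IsLatticeModule R Λ N' → IsLatticeModule R Λ X → IsLatticeModule R Λ L' →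
      ∀ (e : N' →ₗ[Λ] X) (p : X →ₗ[Λ] L'), Function.Injective e → Function.Surjective p →
        LinearMap.range e = LinearMap.ker p →
        ∃ h : L' →ₗ[Λ] X, ∀ x : L', p (h x) = algebraMap R Λ (π ^ k₀) • x)
    (k : ℕ) (hk : k > k₀)
    (N : Type u) [AddCommGroup N] [Module Λ N] (hN : RTorsionFree R Λ N) :
    -- write `Nk` for `N_k = N/Nπ^k`
    let Nk := N ⧸ smulRange R Λ N (π ^ k)
    -- `sol*` is independent of the choice of entrywise lift of a matrix over `Λ_k`
    (∀ (l n : ℕ) (T T' : Matrix (Fin (l + 1)) (Fin n) Λ),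
      (∀ a b, ∃ c : Λ, T a b - T' a b = algebraMap R Λ (π ^ k) * c) →
      solModSet T N (π ^ k) = solModSet T' N (π ^ k)) ∧
    -- the assignment preserves and reflects inclusions (hence is well defined and injective
    -- on the subgroups themselves, with inclusion-preserving inverse)
    (∀ (l n l' n' : ℕ) (T : Matrix (Fin (l + 1)) (Fin n) Λ)
      (T' : Matrix (Fin (l' + 1)) (Fin n') Λ),
      (Set.range fun m : Nk => algebraMap R Λ (π ^ (k - k₀)) • m) ⊆ solSet T Nk →
      (Set.range fun m : Nk => algebraMap R Λ (π ^ (k - k₀)) • m) ⊆ solSet T' Nk →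
      (solSet T Nk ⊆ solSet T' Nk ↔ solModSet T N (π ^ k) ⊆ solModSet T' N (π ^ k))) ∧
    -- it maps into the interval `[π^{k-k₀} | x, x = x]` of pp-definable subgroups of `N`
    (∀ (l n : ℕ) (T : Matrix (Fin (l + 1)) (Fin n) Λ),
      (Set.range fun m : Nk => algebraMap R Λ (π ^ (k - k₀)) • m) ⊆ solSet T Nk →
      ∃ (l'' n'' : ℕ) (T'' : Matrix (Fin (l'' + 1)) (Fin n'') Λ),
        solModSet T N (π ^ k) = solSet T'' N ∧
        (Set.range fun m : N => algebraMap R Λ (π ^ (k - k₀)) • m) ⊆ solSet T'' N) ∧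
    -- and it is onto that interval
    (∀ (l n : ℕ) (T : Matrix (Fin (l + 1)) (Fin n) Λ),
      (Set.range fun m : N => algebraMap R Λ (π ^ (k - k₀)) • m) ⊆ solSet T N →
      ∃ (l' n' : ℕ) (S : Matrix (Fin (l' + 1)) (Fin n') Λ),
        (Set.range fun m : Nk => algebraMap R Λ (π ^ (k - k₀)) • m) ⊆ solSet S Nk ∧
        solModSet S N (π ^ k) = solSet T N) := by
  intro Nk
  have hπ0 : π ≠ 0 := by
    intro h
    apply IsDiscreteValuationRing.not_a_field R
    rw [hπ, h]
    exact Ideal.span_singleton_eq_bot.2 rfl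
  haveI : Module.Finite R Λ := hΛ.fin
  haveI : IsNoetherianRing Λ := by
    have h1 : IsNoetherian R Λ := isNoetherian_of_isNoetherianRing_of_finite R Λ
    exact isNoetherianRing_iff.2 (isNoetherian_of_tower R h1)
  refine ⟨?_, ?_, ?_, ?_⟩
  · -- independence of the lift
    intro l n T T' hTT'
    have hsc : ∀ (a : Fin (l + 1)) (b : Fin n) (v : N ⧸ smulRange R Λ N (π ^ k)),
        T a b • v = T' a b • v := by
      intro a b v
      obtain ⟨c, hc⟩ := hTT' a b
      have hT : T a b = T' a b + algebraMap R Λ (π ^ k) * c := by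
        rw [← hc]; abel
      rw [hT, add_smul, mul_smul, quot_smul_zero, add_zero]
    have hsol : solSet T (N ⧸ smulRange R Λ N (π ^ k))
        = solSet T' (N ⧸ smulRange R Λ N (π ^ k)) := by
      ext v
      simp only [solSet, Set.mem_setOf_eq, hsc]
    ext m
    constructor
    · intro hm
      have h1 := (solModSet_iff_mkQ T (π ^ k)).1 hm
      rw [hsol] at h1
      exact (solModSet_iff_mkQ T' (π ^ k)).2 h1
    · intro hm
      have h1 := (solModSet_iff_mkQ T' (π ^ k)).1 hm
      rw [← hsol] at h1
      exact (solModSet_iff_mkQ T (π ^ k)).2 h1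
  · -- inclusion-preserving and -reflecting
    intro l n l' n' T T' _ _
    constructor
    · intro hsub m hm
      have h1 := (solModSet_iff_mkQ T (π ^ k)).1 hm
      exact (solModSet_iff_mkQ T' (π ^ k)).2 (hsub h1)
    · intro hsub v hv
      obtain ⟨m, rfl⟩ := (smulRange R Λ N (π ^ k)).mkQ_surjective v
      have h1 := (solModSet_iff_mkQ T (π ^ k)).2 hv
      exact (solModSet_iff_mkQ T' (π ^ k)).1 (hsub h1)
  · -- sol* is pp-definable and lies in the interval
    intro l n T hT
    have key : solModSet T N (π ^ k)
        = solSet (extMatrix T (-(algebraMap R Λ (π ^ k)))) N :=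
      (solSet_extMatrix T (π ^ k)).symm
    refine ⟨l + n, n, extMatrix T (-(algebraMap R Λ (π ^ k))), key, ?_⟩
    rintro _ ⟨m0, rfl⟩
    show algebraMap R Λ (π ^ (k - k₀)) • m0 ∈ _
    rw [← key]
    apply (solModSet_iff_mkQ T (π ^ k)).2
    rw [map_smul]
    exact hT ⟨(smulRange R Λ N (π ^ k)).mkQ m0, rfl⟩
  · -- onto the interval
    intro l n T hT
    exact maranda_onto hπ0 (le_of_lt hk) hk₀ hN T hT
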